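/- arXiv:1305.5092 — 4 statements merged into one kernel-verified Lean document; each statement's English description precedes it below -/
import Mathlib

section
/- Let A be an arrangement of 12 distinct lines in P^2(C) all of whose multiple points have multiplicity at most 5, having at least one quintuple point and no quadruple points. Then A admits no non-constant 3-cocycle η : A → F_3. -/
open scoped Classical

noncomputable section

/-- The complex projective plane `P²(ℂ)`. -/
abbrev ProjPlane : Type := Projectivization ℂ (Fin 3 → ℂ)

/-- A subset of `P²(ℂ)` is a projective line if it is the zero locus of a nonzero
linear form. -/
def IsProjLine (S : Set ProjPlane) : Prop :=
  ∃ f : (Fin 3 → ℂ) →ₗ[ℂ] ℂ, f ≠ 0 ∧ S = {p : ProjPlane | f p.rep = 0}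

/-- The lines of the arrangement `A` passing through the point `p`. -/
def linesThrough (A : Finset (Set ProjPlane)) (p : ProjPlane) : Finset (Set ProjPlane) :=
  A.filter fun L => p ∈ L

/-- The multiplicity of a point `p` with respect to the arrangement `A`. -/
def mult (A : Finset (Set ProjPlane)) (p : ProjPlane) : ℕ :=
  (linesThrough A p).card

/-- `p` is a multiple point of the arrangement `A` (at least two lines pass through it). -/
def IsMultPoint (A : Finset (Set ProjPlane)) (p : ProjPlane) : Prop :=
  2 ≤ mult A p

/-- A `q`-cocycle of the line arrangement `A`: for every multiple point `p`,
if `q` divides the multiplicity then the values of `η` on the lines through `p` sum to `0`,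
and otherwise `η` is constant on the lines through `p`. -/
def IsCocycle (q : ℕ) (A : Finset (Set ProjPlane)) (η : Set ProjPlane → ZMod q) : Prop :=
  ∀ p : ProjPlane, IsMultPoint A p →
    ((q ∣ mult A p → ∑ L ∈ linesThrough A p, η L = 0) ∧
     (¬ q ∣ mult A p → ∀ L ∈ linesThrough A p, ∀ K ∈ linesThrough A p, η L = η K))

/-- A function on lines is non-constant on the arrangement `A`. -/
def NonConstant {α : Type*} (A : Finset (Set ProjPlane)) (η : Set ProjPlane → α) : Prop :=
  ∃ L ∈ A, ∃ K ∈ A, η L ≠ η K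

/-- A `(k,q)`-net structure on the line arrangement `A`, with classes `C 0, …, C (k-1)`:
the classes partition `A` into `k` classes of `q` lines each, and whenever two lines from
different classes meet, their intersection point lies on exactly one line of each class. -/
def IsNet (k q : ℕ) (A : Finset (Set ProjPlane)) (C : Fin k → Finset (Set ProjPlane)) : Prop :=
  (∀ L ∈ A, IsProjLine L) ∧
  A.card = k * q ∧
  (∀ i, (C i).card = q) ∧
  (∀ i j, i ≠ j → Disjoint (C i) (C j)) ∧
  (∀ i, C i ⊆ A) ∧
  (∀ L ∈ A, ∃ i, L ∈ C i) ∧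
  (∀ i j, i ≠ j → ∀ L ∈ C i, ∀ K ∈ C j, ∀ p : ProjPlane, p ∈ L → p ∈ K →
    ∀ m : Fin k, ∃! N, N ∈ C m ∧ p ∈ N)

/-- Lattice isomorphism of two line arrangements: a bijection between the lines such that
a subfamily of lines has a common point iff the image subfamily has a common point. -/
def LatticeIso (A B : Finset (Set ProjPlane)) : Prop :=
  ∃ φ : Set ProjPlane → Set ProjPlane, Set.BijOn φ ↑A ↑B ∧
    ∀ S : Finset (Set ProjPlane), S ⊆ A →
      ((∃ p : ProjPlane, ∀ L ∈ S, p ∈ L) ↔ ∃ p : ProjPlane, ∀ L ∈ S, p ∈ φ L)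

/-- The projective line with homogeneous equation `a·x + b·y + c·z = 0`. -/
def lineOf (a b c : ℂ) : Set ProjPlane :=
  {p : ProjPlane | a * p.rep 0 + b * p.rep 1 + c * p.rep 2 = 0}

/-! ### Auxiliary lemmas -/

private lemma exists_common_zero (f g : (Fin 3 → ℂ) →ₗ[ℂ] ℂ) :
    ∃ p : ProjPlane, f p.rep = 0 ∧ g p.rep = 0 := by
  have hker : LinearMap.ker (f.prod g) ≠ ⊥ := by
    intro h
    have h1 := LinearMap.finrank_range_add_finrank_ker (f.prod g)
    rw [h, finrank_bot] at h1
    have h2 : Module.finrank ℂ (LinearMap.range (f.prod g)) ≤ Module.finrank ℂ (ℂ × ℂ) :=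
      Submodule.finrank_le _
    simp [Module.finrank_fintype_fun_eq_card] at h1 h2
    omega
  obtain ⟨v, hv, hv0⟩ := Submodule.exists_mem_ne_zero_of_ne_bot hker
  refine ⟨Projectivization.mk ℂ v hv0, ?_⟩
  have hmk : Projectivization.mk ℂ v hv0 =
      Projectivization.mk ℂ (Projectivization.mk ℂ v hv0).rep
        (Projectivization.rep_nonzero _) := (Projectivization.mk_rep _).symm
  rw [Projectivization.mk_eq_mk_iff] at hmk
  obtain ⟨t, ht⟩ := hmk
  rw [LinearMap.mem_ker, LinearMap.prod_apply] at hv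
  have hf : f v = 0 := congrArg Prod.fst hv
  have hg : g v = 0 := congrArg Prod.snd hv
  constructor
  · have := congrArg f ht.symm
    simp only [LinearMap.map_smul_of_tower, hf] at this
    exact (smul_eq_zero_iff_eq t).mp this.symm
  · have := congrArg g ht.symm
    simp only [LinearMap.map_smul_of_tower, hg] at this
    exact (smul_eq_zero_iff_eq t).mp this.symm

private lemma inter_exists {L K : Set ProjPlane} (hL : IsProjLine L) (hK : IsProjLine K) :
    ∃ p : ProjPlane, p ∈ L ∧ p ∈ K := by
  obtain ⟨f, _, rfl⟩ := hL
  obtain ⟨g, _, rfl⟩ := hK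
  obtain ⟨p, h1, h2⟩ := exists_common_zero f g
  exact ⟨p, h1, h2⟩

private lemma ker_eq_span {f : (Fin 3 → ℂ) →ₗ[ℂ] ℂ} (hf : f ≠ 0) {v w : Fin 3 → ℂ}
    (hind : LinearIndependent ℂ ![v, w]) (hv : f v = 0) (hw : f w = 0) :
    LinearMap.ker f = Submodule.span ℂ {v, w} := by
  have hle : Submodule.span ℂ {v, w} ≤ LinearMap.ker f := by
    rw [Submodule.span_le]
    rintro x (rfl | rfl) <;> simpa [LinearMap.mem_ker]
  have hrange : Module.finrank ℂ (LinearMap.range f) = 1 := by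
    have h1 : Module.finrank ℂ (LinearMap.range f) ≤ 1 := by
      simpa using Submodule.finrank_le (LinearMap.range f)
    have h2 : LinearMap.range f ≠ ⊥ := by
      simpa [LinearMap.range_eq_bot] using hf
    have h3 : 0 < Module.finrank ℂ (LinearMap.range f) := by
      rw [Module.finrank_pos_iff]
      obtain ⟨x, hx, hx0⟩ := Submodule.exists_mem_ne_zero_of_ne_bot h2
      exact nontrivial_of_ne ⟨x, hx⟩ 0 (by simpa using hx0)
    omega
  have hker : Module.finrank ℂ (LinearMap.ker f) = 2 := by
    have := LinearMap.finrank_range_add_finrank_ker f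
    simp [Module.finrank_fintype_fun_eq_card, hrange] at this
    omega
  have hspan : Module.finrank ℂ (Submodule.span ℂ ({v, w} : Set (Fin 3 → ℂ))) = 2 := by
    have hr : Set.range ![v, w] = ({v, w} : Set (Fin 3 → ℂ)) := by
      simp [Matrix.range_cons, Matrix.range_empty, Set.insert_comm, Set.pair_comm]
    rw [← hr, finrank_span_eq_card hind]
    simp
  exact (Submodule.eq_of_le_of_finrank_le hle (by omega)).symm

private lemma line_pt_unique {L K : Set ProjPlane} (hL : IsProjLine L) (hK : IsProjLine K)
    (hne : L ≠ K) {p q : ProjPlane} (hpL : p ∈ L) (hpK : p ∈ K) (hqL : q ∈ L) (hqK : q ∈ K) :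
    p = q := by
  by_contra hpq
  obtain ⟨f, hf0, rfl⟩ := hL
  obtain ⟨g, hg0, rfl⟩ := hK
  set v := p.rep with hv
  set w := q.rep with hw
  have hind : LinearIndependent ℂ ![v, w] := by
    rw [linearIndependent_fin2]
    refine ⟨q.rep_nonzero, fun t ht => ?_⟩
    apply hpq
    have ht0 : t ≠ 0 := by
      rintro rfl
      exact p.rep_nonzero (by simpa using ht.symm)
    have hmm : Projectivization.mk ℂ v p.rep_nonzero = Projectivization.mk ℂ w q.rep_nonzero := by
      rw [Projectivization.mk_eq_mk_iff]
      exact ⟨Units.mk0 t ht0, ht⟩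
    rwa [Projectivization.mk_rep, Projectivization.mk_rep] at hmm
  have h1 := ker_eq_span hf0 hind hpL hqL
  have h2 := ker_eq_span hg0 hind hpK hqK
  apply hne
  ext r
  simp only [Set.mem_setOf_eq]
  rw [← LinearMap.mem_ker, ← LinearMap.mem_ker, h1, h2]

private lemma zmod3_facts : ∀ a b : ZMod 3, b ≠ a →
    (-b - a ≠ a ∧ -b - a ≠ b ∧ -(-b - a) - a = b) := by decide

private lemma main_claim (A : Finset (Set ProjPlane))
    (hlines : ∀ L ∈ A, IsProjLine L)
    (hmult : ∀ p : ProjPlane, IsMultPoint A p → mult A p ≤ 5)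
    (hquad : ∀ p : ProjPlane, mult A p ≠ 4)
    {P : ProjPlane} (hP : mult A P = 5)
    {η : Set ProjPlane → ZMod 3} (hη : IsCocycle 3 A η)
    {a : ZMod 3} (ha : ∀ L ∈ linesThrough A P, η L = a)
    {K : Set ProjPlane} (hKA : K ∈ A) (hKa : η K ≠ a) :
    5 ≤ (A.filter (fun L => η L = -η K - a)).card := by
  have hKP : P ∉ K := fun h => hKa (ha K (Finset.mem_filter.mpr ⟨hKA, h⟩))
  have key : ∀ L : Set ProjPlane, ∃ M : Set ProjPlane, L ∈ linesThrough A P →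
      (M ∈ A ∧ η M = -η K - a) ∧ M ≠ K ∧ ∃ p : ProjPlane, p ∈ K ∧ p ∈ L ∧ p ∈ M := by
    intro L
    by_cases hL : L ∈ linesThrough A P
    swap
    · exact ⟨K, fun h => absurd h hL⟩
    have hLA : L ∈ A := (Finset.mem_filter.mp hL).1
    have hPL : P ∈ L := (Finset.mem_filter.mp hL).2
    have hKL : K ≠ L := fun h => hKP (h ▸ hPL)
    obtain ⟨q, hqL, hqK⟩ := inter_exists (hlines L hLA) (hlines K hKA)
    have hKq : K ∈ linesThrough A q := Finset.mem_filter.mpr ⟨hKA, hqK⟩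
    have hLq : L ∈ linesThrough A q := Finset.mem_filter.mpr ⟨hLA, hqL⟩
    have hpair : ({K, L} : Finset (Set ProjPlane)) ⊆ linesThrough A q := by
      intro x hx
      rcases Finset.mem_insert.mp hx with rfl | hx
      · exact hKq
      · rw [Finset.mem_singleton.mp hx]; exact hLq
    have hmp : IsMultPoint A q := by
      have h2 := Finset.card_le_card hpair
      rw [Finset.card_pair hKL] at h2
      exact h2
    have hmq5 := hmult q hmp
    have hmq4 := hquad q
    have hmq2 : 2 ≤ mult A q := hmp
    obtain ⟨hsum, hconst⟩ := hη q hmp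
    have h3 : mult A q = 3 := by
      by_contra h3
      have hnd : ¬ ((3:ℕ) ∣ mult A q) := by omega
      exact hKa ((hconst hnd K hKq L hLq).trans (ha L hL))
    have hsum0 := hsum (by rw [h3])
    have hcard3 : (linesThrough A q).card = 3 := h3
    have hdiff : (linesThrough A q \ {K, L}).card = 1 := by
      rw [Finset.card_sdiff_of_subset hpair, hcard3, Finset.card_pair hKL]
    obtain ⟨M, hM⟩ := Finset.card_eq_one.mp hdiff
    have hMd : M ∈ linesThrough A q \ {K, L} := hM ▸ Finset.mem_singleton_self M
    have hMq : M ∈ linesThrough A q := (Finset.mem_sdiff.mp hMd).1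
    have hMKL : M ≠ K ∧ M ≠ L := by
      have := (Finset.mem_sdiff.mp hMd).2
      simp only [Finset.mem_insert, Finset.mem_singleton] at this
      tauto
    have hseq : linesThrough A q = {K, L, M} := by
      apply Finset.Subset.antisymm
      · intro x hx
        simp only [Finset.mem_insert, Finset.mem_singleton]
        by_cases hxK : x = K
        · tauto
        by_cases hxL : x = L
        · tauto
        have : x ∈ linesThrough A q \ {K, L} := by
          rw [Finset.mem_sdiff]
          exact ⟨hx, by simp [hxK, hxL]⟩
        rw [hM, Finset.mem_singleton] at this
        tauto
      · intro x hx
        simp only [Finset.mem_insert, Finset.mem_singleton] at hx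
        rcases hx with rfl | rfl | rfl
        exacts [hKq, hLq, hMq]
    have hsum3 : η K + η L + η M = 0 := by
      rw [hseq] at hsum0
      rw [Finset.sum_insert (by simp [hKL, hMKL.1.symm]),
        Finset.sum_insert (by simp [hMKL.2.symm]), Finset.sum_singleton] at hsum0
      linear_combination hsum0
    have hML : η M = -η K - a := by
      rw [ha L hL] at hsum3
      linear_combination hsum3
    exact ⟨M, fun _ => ⟨⟨(Finset.mem_filter.mp hMq).1, hML⟩, hMKL.1,
      q, hqK, hqL, (Finset.mem_filter.mp hMq).2⟩⟩
  choose F hF using key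
  have hmaps : ∀ L ∈ linesThrough A P, F L ∈ A.filter (fun L => η L = -η K - a) := by
    intro L hL
    exact Finset.mem_filter.mpr (hF L hL).1
  have hinj : Set.InjOn F (linesThrough A P : Set (Set ProjPlane)) := by
    intro L1 hL1 L2 hL2 hFe
    rw [Finset.mem_coe] at hL1 hL2
    by_contra hne
    obtain ⟨⟨hF1A, hF1v⟩, hF1K, p1, hp1K, hp1L, hp1M⟩ := hF L1 hL1
    obtain ⟨⟨hF2A, _⟩, _, p2, hp2K, hp2L, hp2M⟩ := hF L2 hL2
    have hL1A : L1 ∈ A := (Finset.mem_filter.mp hL1).1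
    have hL2A : L2 ∈ A := (Finset.mem_filter.mp hL2).1
    have hPL1 : P ∈ L1 := (Finset.mem_filter.mp hL1).2
    have hPL2 : P ∈ L2 := (Finset.mem_filter.mp hL2).2
    by_cases hpp : p1 = p2
    · have hp1L2 : p1 ∈ L2 := by rw [hpp]; exact hp2L
      have hP1 := line_pt_unique (hlines L1 hL1A) (hlines L2 hL2A) hne hp1L hp1L2 hPL1 hPL2
      exact hKP (hP1 ▸ hp1K)
    · have hp2M1 : p2 ∈ F L1 := by rw [hFe]; exact hp2M
      have := line_pt_unique (hlines (F L1) hF1A) (hlines K hKA) hF1K hp1M hp1K hp2M1 hp2K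
      exact hpp this
  have hle := Finset.card_le_card_of_injOn F hmaps hinj
  have hTcard : (linesThrough A P).card = 5 := hP
  omega

/-- an arrangement of 12 lines with points of multiplicity at most 5, with
at least one quintuple point and no quadruple point, has no non-constant 3-cocycle. -/
theorem statement15 (A : Finset (Set ProjPlane))
    (hlines : ∀ L ∈ A, IsProjLine L) (hcard : A.card = 12)
    (hmult : ∀ p : ProjPlane, IsMultPoint A p → mult A p ≤ 5)
    (hquint : ∃ p : ProjPlane, mult A p = 5)
    (hquad : ∀ p : ProjPlane, mult A p ≠ 4) :
    ¬ ∃ η : Set ProjPlane → ZMod 3, IsCocycle 3 A η ∧ NonConstant A η := by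
  rintro ⟨η, hη, L0, hL0A, K0, hK0A, hne⟩
  obtain ⟨P, hP⟩ := hquint
  have hTmp : IsMultPoint A P := by
    have : 2 ≤ mult A P := by omega
    exact this
  have hconst := (hη P hTmp).2 (by omega)
  obtain ⟨L1, hL1⟩ := Finset.card_pos.mp (show 0 < (linesThrough A P).card by
    have : mult A P = 5 := hP; unfold mult at this; omega)
  set a := η L1 with ha_def
  have ha : ∀ L ∈ linesThrough A P, η L = a := fun L hL => hconst L hL L1 hL1
  have hex : ∃ K ∈ A, η K ≠ a := by
    by_cases h : η L0 = a
    · exact ⟨K0, hK0A, fun hc => hne (by rw [h, hc])⟩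
    · exact ⟨L0, hL0A, h⟩
  obtain ⟨K, hKA, hKa⟩ := hex
  obtain ⟨hcna, hcnb, hb⟩ := zmod3_facts a (η K) hKa
  have h1 := main_claim A hlines hmult hquad hP hη ha hKA hKa
  obtain ⟨M1, hM1⟩ := Finset.card_pos.mp (lt_of_lt_of_le (by norm_num) h1)
  have hM1A : M1 ∈ A := (Finset.mem_filter.mp hM1).1
  have hM1c : η M1 = -η K - a := (Finset.mem_filter.mp hM1).2
  have h2 := main_claim A hlines hmult hquad hP hη ha hM1A (by rw [hM1c]; exact hcna)
  have h2' : 5 ≤ (A.filter fun L => η L = η K).card := by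
    refine le_trans h2 (Finset.card_le_card ?_)
    intro L hL
    rw [Finset.mem_filter] at hL ⊢
    refine ⟨hL.1, ?_⟩
    rw [hL.2, hM1c]
    exact hb
  have h0 : 5 ≤ (A.filter fun L => η L = a).card := by
    have hsub : linesThrough A P ⊆ A.filter fun L => η L = a := by
      intro L hL
      exact Finset.mem_filter.mpr ⟨(Finset.mem_filter.mp hL).1, ha L hL⟩
    have := Finset.card_le_card hsub
    have hT5 : (linesThrough A P).card = 5 := hP
    omega
  set Sa := A.filter fun L => η L = a with hSa
  set Sb := A.filter fun L => η L = η K with hSb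
  set Sc := A.filter fun L => η L = -η K - a with hSc
  have hdab : Disjoint Sa Sb := by
    rw [Finset.disjoint_left]
    intro x hxa hxb
    exact hKa (((Finset.mem_filter.mp hxb).2.symm).trans (Finset.mem_filter.mp hxa).2)
  have hdc : Disjoint (Sa ∪ Sb) Sc := by
    rw [Finset.disjoint_left]
    intro x hxab hxc
    have hc := (Finset.mem_filter.mp hxc).2
    rcases Finset.mem_union.mp hxab with hx | hx
    · exact hcna (hc.symm.trans (Finset.mem_filter.mp hx).2)
    · exact hcnb (hc.symm.trans (Finset.mem_filter.mp hx).2)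
  have hcu : (Sa ∪ Sb ∪ Sc).card = Sa.card + Sb.card + Sc.card := by
    rw [Finset.card_union_of_disjoint hdc, Finset.card_union_of_disjoint hdab]
  have hsubA : Sa ∪ Sb ∪ Sc ⊆ A := by
    intro x hx
    rcases Finset.mem_union.mp hx with hx | hx
    · rcases Finset.mem_union.mp hx with hx | hx <;> exact (Finset.mem_filter.mp hx).1
    · exact (Finset.mem_filter.mp hx).1
  have := Finset.card_le_card hsubA
  omega
end
end

section
/- Let A be an arrangement of 12 distinct lines in P^2(C) all of whose multiple points have multiplicity at most 5, having at least one quadruple point. If A admits a non-constant 3-cocycle η : A → F_3, then A is a (3,4)-net, i.e. A admits a partition into three classes of four lines each such that whenever two lines from different classes meet, their intersection point lies on exactly one line from each of the three classes. -/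
open scoped Classical

noncomputable section

/-!
At a point where two lines carry different values of `η`, the multiplicity is divisible by `3`
and at most `5`, hence equal to `3`, and the cocycle condition `η L + η K + η M = 0` forces the
three lines through it to carry the three distinct values of `ZMod 3`. So the fibres of `η` are
the candidate classes, and every mixed intersection point is a triple point of the right kind.
Fixing a line `L₀` of value `a`, sending a line of value `b` to the unique line of value `c`
through its intersection with `L₀` injects the `b`-fibre into the `c`-fibre, so all three
fibres have the same size, namely `12 / 3 = 4`.
-/

open Finset Module Projectivization
open scoped LinearAlgebra.Projectivization

section LinearForms

variable {K V : Type*} [Field K] [AddCommGroup V] [Module K V]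

lemma Projectivization.map_rep_mk_eq_zero {f : V →ₗ[K] K} {v : V} (hv : v ≠ 0) (h : f v = 0) :
    f (mk K v hv).rep = 0 := by
  obtain ⟨a, ha⟩ := exists_smul_eq_mk_rep K v hv
  rw [← ha, Units.smul_def, map_smul, h, smul_zero]

variable [FiniteDimensional K V]

lemma exists_map_rep_eq_zero_and_map_rep_eq_zero (hV : 2 < finrank K V) (f g : V →ₗ[K] K) :
    ∃ p : ℙ K V, f p.rep = 0 ∧ g p.rep = 0 := by
  have hker : LinearMap.ker (f.prod g) ≠ ⊥ :=
    LinearMap.ker_ne_bot_of_finrank_lt (by simpa using hV)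
  obtain ⟨v, hv, hv0⟩ := Submodule.exists_mem_ne_zero_of_ne_bot hker
  rw [LinearMap.ker_prod, Submodule.mem_inf] at hv
  exact ⟨mk K v hv0, map_rep_mk_eq_zero hv0 hv.1, map_rep_mk_eq_zero hv0 hv.2⟩

lemma ker_eq_span_pair_rep (hV : finrank K V = 3) {f : V →ₗ[K] K} (hf : f ≠ 0)
    {p q : ℙ K V} (hpq : p ≠ q) (hp : f p.rep = 0) (hq : f q.rep = 0) :
    LinearMap.ker f = Submodule.span K (Set.range ![p.rep, q.rep]) := by
  have hle : Submodule.span K (Set.range ![p.rep, q.rep]) ≤ LinearMap.ker f := by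
    rw [Submodule.span_le, Set.range_subset_iff]
    intro i
    fin_cases i <;> assumption
  refine (Submodule.eq_of_le_of_finrank_le hle ?_).symm
  have hker := Module.Dual.finrank_ker_add_one_of_ne_zero hf
  rw [finrank_span_eq_card (linearIndependent_pair_iff_ne.2 hpq)]
  simp only [Fintype.card_fin]
  omega

end LinearForms

namespace IsProjLine

variable {L M : Set ProjPlane}

lemma exists_mem_inter (hL : IsProjLine L) (hM : IsProjLine M) : ∃ p, p ∈ L ∧ p ∈ M := by
  obtain ⟨f, -, rfl⟩ := hL
  obtain ⟨g, -, rfl⟩ := hM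
  exact exists_map_rep_eq_zero_and_map_rep_eq_zero (by simp) f g

lemma eq_of_mem_inter (hL : IsProjLine L) (hM : IsProjLine M) (hLM : L ≠ M) {p q : ProjPlane}
    (hpL : p ∈ L) (hpM : p ∈ M) (hqL : q ∈ L) (hqM : q ∈ M) : p = q := by
  by_contra hpq
  obtain ⟨f, hf, rfl⟩ := hL
  obtain ⟨g, hg, rfl⟩ := hM
  have hV : finrank ℂ (Fin 3 → ℂ) = 3 := by simp
  have hker : LinearMap.ker f = LinearMap.ker g :=
    (ker_eq_span_pair_rep hV hf hpq hpL hqL).trans (ker_eq_span_pair_rep hV hg hpq hpM hqM).symm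
  exact hLM (by ext x; simp only [Set.mem_ofPred_eq, ← LinearMap.mem_ker, hker])

end IsProjLine

lemma ZMod.existsUnique_eq_of_sum_eq_zero {ι : Type*} {s : Finset ι} (hs : #s = 3)
    {f : ι → ZMod 3} (hsum : ∑ i ∈ s, f i = 0) {i j : ι} (hi : i ∈ s) (hj : j ∈ s)
    (hij : f i ≠ f j) (z : ZMod 3) : ∃! k, k ∈ s ∧ f k = z := by
  obtain ⟨x, y, w, hxy, hxw, hyw, rfl⟩ := card_eq_three.1 hs
  rw [sum_insert (by simp [hxy, hxw]), sum_insert (by simp [hyw]), sum_singleton,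
    ← add_assoc] at hsum
  have hdistinct : ∀ a b c : ZMod 3, a + b + c = 0 → ¬(a = b ∧ b = c) →
      a ≠ b ∧ a ≠ c ∧ b ≠ c := by decide
  have hnconst : ¬(f x = f y ∧ f y = f w) := by
    simp only [mem_insert, mem_singleton] at hi hj
    rintro ⟨hfxy, hfyw⟩
    rcases hi with rfl | rfl | rfl <;> rcases hj with rfl | rfl | rfl <;> simp_all
  obtain ⟨hfxy, hfxw, hfyw⟩ := hdistinct _ _ _ hsum hnconst
  have hinj : Set.InjOn f ↑({x, y, w} : Finset ι) := by
    simp only [coe_insert, coe_singleton]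
    rintro k (rfl | rfl | rfl) l (rfl | rfl | rfl) hkl <;> simp_all
  have himage : ({x, y, w} : Finset ι).image f = univ :=
    eq_univ_of_card _ (by rw [card_image_of_injOn hinj, hs, ZMod.card])
  obtain ⟨k, hk, rfl⟩ := mem_image.1 (himage ▸ mem_univ z)
  exact ⟨k, ⟨hk, rfl⟩, fun l hl => hinj hl.1 hk hl.2⟩

section Cocycle

variable {A : Finset (Set ProjPlane)} {η : Set ProjPlane → ZMod 3}

lemma mult_eq_three_of_ne (hmult : ∀ p : ProjPlane, IsMultPoint A p → mult A p ≤ 5)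
    (hη : IsCocycle 3 A η) {p : ProjPlane} {L K : Set ProjPlane} (hL : L ∈ linesThrough A p)
    (hK : K ∈ linesThrough A p) (hLK : η L ≠ η K) : mult A p = 3 := by
  have hp : IsMultPoint A p := one_lt_card.2 ⟨L, hL, K, hK, ne_of_apply_ne η hLK⟩
  have h3 : 3 ∣ mult A p := by_contra fun h => hLK ((hη p hp).2 h L hL K hK)
  have h5 := hmult p hp
  unfold IsMultPoint at hp
  omega

lemma existsUnique_mem_linesThrough_eq (hmult : ∀ p : ProjPlane, IsMultPoint A p → mult A p ≤ 5)
    (hη : IsCocycle 3 A η) {p : ProjPlane} {L K : Set ProjPlane} (hL : L ∈ linesThrough A p)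
    (hK : K ∈ linesThrough A p) (hLK : η L ≠ η K) (z : ZMod 3) :
    ∃! M, M ∈ linesThrough A p ∧ η M = z := by
  have h3 := mult_eq_three_of_ne hmult hη hL hK hLK
  have hp : IsMultPoint A p := by unfold IsMultPoint; omega
  exact ZMod.existsUnique_eq_of_sum_eq_zero h3 ((hη p hp).1 (h3 ▸ dvd_rfl)) hL hK hLK z

lemma card_filter_le_card_filter (hlines : ∀ L ∈ A, IsProjLine L)
    (hmult : ∀ p : ProjPlane, IsMultPoint A p → mult A p ≤ 5) (hη : IsCocycle 3 A η)
    {L₀ : Set ProjPlane} (hL₀ : L₀ ∈ A) {b c : ZMod 3} (hb : η L₀ ≠ b) (hc : η L₀ ≠ c) :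
    #(A.filter (η · = b)) ≤ #(A.filter (η · = c)) := by
  refine card_le_card_of_forall_subsingleton (fun K N => ∃ p ∈ L₀, p ∈ K ∧ p ∈ N) ?_ ?_
  · intro K hK
    obtain ⟨hKA, hKb⟩ := mem_filter.1 hK
    obtain ⟨p, hpL₀, hpK⟩ := (hlines L₀ hL₀).exists_mem_inter (hlines K hKA)
    obtain ⟨N, ⟨hN, hNc⟩, -⟩ := existsUnique_mem_linesThrough_eq hmult hη
      (mem_filter.2 ⟨hL₀, hpL₀⟩) (mem_filter.2 ⟨hKA, hpK⟩) (hKb ▸ hb) c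
    obtain ⟨hNA, hpN⟩ := mem_filter.1 hN
    exact ⟨N, mem_filter.2 ⟨hNA, hNc⟩, p, hpL₀, hpK, hpN⟩
  · intro N hN K₁ ⟨hK₁, p, hpL₀, hpK₁, hpN⟩ K₂ ⟨hK₂, q, hqL₀, hqK₂, hqN⟩
    obtain ⟨hNA, hNc⟩ := mem_filter.1 hN
    obtain ⟨hK₁A, hK₁b⟩ := mem_filter.1 hK₁
    obtain ⟨hK₂A, hK₂b⟩ := mem_filter.1 hK₂
    obtain rfl : p = q := (hlines L₀ hL₀).eq_of_mem_inter (hlines N hNA)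
      (ne_of_apply_ne η (hNc ▸ hc)) hpL₀ hpN hqL₀ hqN
    exact (existsUnique_mem_linesThrough_eq hmult hη (mem_filter.2 ⟨hL₀, hpL₀⟩)
      (mem_filter.2 ⟨hNA, hpN⟩) (hNc ▸ hc) b).unique
      ⟨mem_filter.2 ⟨hK₁A, hpK₁⟩, hK₁b⟩ ⟨mem_filter.2 ⟨hK₂A, hqK₂⟩, hK₂b⟩

lemma exists_mem_eq_of_nonConstant (hlines : ∀ L ∈ A, IsProjLine L)
    (hmult : ∀ p : ProjPlane, IsMultPoint A p → mult A p ≤ 5) (hη : IsCocycle 3 A η)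
    (hnc : NonConstant A η) (z : ZMod 3) : ∃ L ∈ A, η L = z := by
  obtain ⟨L, hL, K, hK, hLK⟩ := hnc
  obtain ⟨p, hpL, hpK⟩ := (hlines L hL).exists_mem_inter (hlines K hK)
  obtain ⟨M, ⟨hM, hMz⟩, -⟩ := existsUnique_mem_linesThrough_eq hmult hη
    (mem_filter.2 ⟨hL, hpL⟩) (mem_filter.2 ⟨hK, hpK⟩) hLK z
  exact ⟨M, (mem_filter.1 hM).1, hMz⟩

lemma card_filter_eq_card_filter (hlines : ∀ L ∈ A, IsProjLine L)
    (hmult : ∀ p : ProjPlane, IsMultPoint A p → mult A p ≤ 5) (hη : IsCocycle 3 A η)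
    (hnc : NonConstant A η) (b c : ZMod 3) :
    #(A.filter (η · = b)) = #(A.filter (η · = c)) := by
  obtain rfl | hbc := eq_or_ne b c
  · rfl
  have hthird : ∀ b c : ZMod 3, b ≠ c → -b - c ≠ b ∧ -b - c ≠ c := by decide
  obtain ⟨L₀, hL₀, hL₀bc⟩ := exists_mem_eq_of_nonConstant hlines hmult hη hnc (-b - c)
  obtain ⟨hb, hc⟩ := hL₀bc ▸ hthird b c hbc
  exact (card_filter_le_card_filter hlines hmult hη hL₀ hb hc).antisymm
    (card_filter_le_card_filter hlines hmult hη hL₀ hc hb)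

end Cocycle

theorem statement16_general (A : Finset (Set ProjPlane))
    (hlines : ∀ L ∈ A, IsProjLine L) (hcard : A.card = 12)
    (hmult : ∀ p : ProjPlane, IsMultPoint A p → mult A p ≤ 5)
    (η : Set ProjPlane → ZMod 3) (hη : IsCocycle 3 A η) (hnc : NonConstant A η) :
    ∃ C : Fin 3 → Finset (Set ProjPlane), IsNet 3 4 A C := by
  have hfibre : ∀ z : ZMod 3, #(A.filter (η · = z)) = 4 := by
    intro z
    have hsum := card_eq_sum_card_fiberwise (s := A) (t := univ) fun L _ => mem_univ (η L)
    simp only [card_filter_eq_card_filter hlines hmult hη hnc _ z, sum_const, card_univ,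
      ZMod.card, smul_eq_mul] at hsum
    omega
  refine ⟨fun i => A.filter (η · = ZMod.finEquiv 3 i), hlines, hcard, fun i => hfibre _, ?_,
    fun i => filter_subset _ _, fun L hL => ⟨(ZMod.finEquiv 3).symm (η L), by simpa using hL⟩, ?_⟩
  · exact fun i j hij => disjoint_filter.2 fun L _ hi hj =>
      hij ((ZMod.finEquiv 3).injective (hi.symm.trans hj))
  · intro i j hij L hL K hK p hpL hpK m
    obtain ⟨hLA, hLi⟩ := mem_filter.1 hL
    obtain ⟨hKA, hKj⟩ := mem_filter.1 hK
    simpa only [linesThrough, mem_filter, and_right_comm] using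
      existsUnique_mem_linesThrough_eq hmult hη (mem_filter.2 ⟨hLA, hpL⟩)
        (mem_filter.2 ⟨hKA, hpK⟩) (by rw [hLi, hKj]; exact (ZMod.finEquiv 3).injective.ne hij)
        (ZMod.finEquiv 3 m)

/-- an arrangement of 12 lines with points of multiplicity at most 5, with
at least one quadruple point, admitting a non-constant 3-cocycle, is a (3,4)-net. -/
theorem statement16 (A : Finset (Set ProjPlane))
    (hlines : ∀ L ∈ A, IsProjLine L) (hcard : A.card = 12)
    (hmult : ∀ p : ProjPlane, IsMultPoint A p → mult A p ≤ 5)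
    (hquad : ∃ p : ProjPlane, mult A p = 4)
    (η : Set ProjPlane → ZMod 3) (hη : IsCocycle 3 A η) (hnc : NonConstant A η) :
    ∃ C : Fin 3 → Finset (Set ProjPlane), IsNet 3 4 A C :=
  statement16_general A hlines hcard hmult η hη hnc
end
end

section
/- Let A be an arrangement of 12 distinct lines in P^2(C) all of whose multiple points have multiplicity at most 5. If A admits a non-constant 2-cocycle η : A → F_2, then A is a (4,3)-net, i.e. A admits a partition into four classes of three lines each such that whenever two lines from different classes meet, their intersection point lies on exactly one line from each of the four classes. -/
open scoped Classical

noncomputable section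

/-!
Call a point *mixed* if two lines of different `η`-value pass through it. At a mixed point the
cocycle condition forces even multiplicity and an even number of lines of value `1`, so, the
multiplicity being at most `5`, exactly two lines of each value pass through it. A line `L` meets
every line of the other value at a mixed point; double counting these points shows that the other
value class has twice as many lines as `L` has neighbours in the graph joining lines of equal value
through a common mixed point. Since `L` has fewer neighbours than its own class has lines, both
classes have six lines and the graph is `3`-regular on each of them. It is also triangle-free, hence
on each class it is `K_{3,3}`. The four sides of these two bipartite graphs are the classes of the
net: the two lines of a given value through a mixed point are adjacent, so they lie on opposite
sides.
-/

theorem ZMod.eq_or_eq_of_ne {a b : ZMod 2} (hab : a ≠ b) (c : ZMod 2) : c = a ∨ c = b := by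
  revert a b c; decide

theorem Finset.card_filter_add_card_filter_of_ne {α : Type*} (s : Finset α) (f : α → ZMod 2)
    {a b : ZMod 2} (hab : a ≠ b) :
    (s.filter (f · = a)).card + (s.filter (f · = b)).card = s.card := by
  rw [← s.card_filter_add_card_filter_not (f · = a)]
  congr 2
  exact Finset.filter_congr fun x _ => by
    rcases ZMod.eq_or_eq_of_ne hab (f x) with h | h <;> simp [h, hab, Ne.symm hab]

theorem Finset.sum_zmod_two_eq_card_filter {α : Type*} (s : Finset α) (f : α → ZMod 2) :
    ∑ x ∈ s, f x = (s.filter (f · = 1)).card := by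
  rw [Finset.natCast_card_filter]
  exact Finset.sum_congr rfl fun x _ => by
    rcases ZMod.eq_or_eq_of_ne zero_ne_one (f x) with h | h <;> simp [h]

theorem Finset.existsUnique_mem_eq_of_card_eq_two {α : Type*} {s : Finset α} (hs : s.card = 2)
    {f : α → Bool} (hf : ∀ x ∈ s, ∀ y ∈ s, x ≠ y → f x ≠ f y) (b : Bool) :
    ∃! x, x ∈ s ∧ f x = b := by
  obtain ⟨x, y, hxy, rfl⟩ := Finset.card_eq_two.mp hs
  have hfxy := hf x (by simp) y (by simp) hxy
  by_cases hx : f x = b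
  · refine ⟨x, ⟨by simp, hx⟩, fun z ⟨hz, hzb⟩ => ?_⟩
    simp only [Finset.mem_insert, Finset.mem_singleton] at hz
    rcases hz with rfl | rfl
    · rfl
    · exact absurd (hzb.trans hx.symm) (Ne.symm hfxy)
  · have hy : f y = b := by cases b <;> cases h : f x <;> simp_all
    refine ⟨y, ⟨by simp, hy⟩, fun z ⟨hz, hzb⟩ => ?_⟩
    simp only [Finset.mem_insert, Finset.mem_singleton] at hz
    rcases hz with rfl | rfl
    · exact absurd hzb hx
    · rfl

theorem SimpleGraph.exists_bipartition_of_regular_of_triangle_free {V : Type*}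
    (G : SimpleGraph V) {S : Finset V} {k : ℕ} (hS : S.card = 2 * k)
    (hreg : ∀ v ∈ S, (S.filter (G.Adj v)).card = k)
    (htri : ∀ u ∈ S, ∀ v ∈ S, ∀ w ∈ S, G.Adj u v → G.Adj u w → ¬ G.Adj v w) :
    ∃ σ : V → Bool, (∀ b, (S.filter (σ · = b)).card = k) ∧
      ∀ u ∈ S, ∀ v ∈ S, (G.Adj u v ↔ σ u ≠ σ v) := by
  rcases S.eq_empty_or_nonempty with rfl | ⟨v₀, hv₀⟩
  · exact ⟨fun _ => true, fun _ => by simp at hS ⊢; omega, by simp⟩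
  set T := S.filter (G.Adj v₀)
  have hTS : T ⊆ S := Finset.filter_subset _ _
  have hT : T.card = k := hreg v₀ hv₀
  have hST : (S \ T).card = k := by rw [Finset.card_sdiff_of_subset hTS]; omega
  have hTind : ∀ u ∈ T, ∀ v ∈ T, ¬ G.Adj u v := fun u hu v hv =>
    htri v₀ hv₀ u (hTS hu) v (hTS hv) (Finset.mem_filter.mp hu).2 (Finset.mem_filter.mp hv).2
  have hnbrT : ∀ u ∈ T, S.filter (G.Adj u) = S \ T := fun u hu =>
    Finset.eq_of_subset_of_card_le
      (fun w hw => Finset.mem_sdiff.mpr ⟨(Finset.mem_filter.mp hw).1,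
        fun hwT => hTind u hu w hwT (Finset.mem_filter.mp hw).2⟩)
      (by rw [hST, hreg u (hTS hu)])
  have hnbrST : ∀ u ∈ S \ T, S.filter (G.Adj u) = T := fun u hu =>
    (Finset.eq_of_subset_of_card_le
      (fun w hw => by
        have : u ∈ S.filter (G.Adj w) := (hnbrT w hw).symm ▸ hu
        exact Finset.mem_filter.mpr ⟨hTS hw, (Finset.mem_filter.mp this).2.symm⟩)
      (by rw [hT, hreg u (Finset.mem_sdiff.mp hu).1])).symm
  refine ⟨fun v => decide (v ∈ T), fun b => ?_, fun u hu v hv => ?_⟩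
  · cases b
    · simpa [Finset.filter_not, Finset.filter_mem_eq_inter] using hST
    · simpa [Finset.filter_mem_eq_inter, Finset.inter_eq_right.mpr hTS] using hT
  · have hadj : G.Adj u v ↔ v ∈ S.filter (G.Adj u) := by simp [hv]
    by_cases huT : u ∈ T
    · rw [hadj, hnbrT u huT]; simp [hv, huT]
    · rw [hadj, hnbrST u (Finset.mem_sdiff.mpr ⟨hu, huT⟩)]; simp [huT]

theorem Module.Dual.finrank_ker_eq_two {K : Type*} [Field K] {f : Module.Dual K (Fin 3 → K)}
    (hf : f ≠ 0) : Module.finrank K (LinearMap.ker f) = 2 := by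
  have := Module.Dual.finrank_ker_add_one_of_ne_zero hf
  rw [Module.finrank_fin_fun] at this
  omega

theorem Projectivization.mem_ker_projectivization_iff {K V W : Type*} [DivisionRing K]
    [AddCommGroup V] [Module K V] [AddCommGroup W] [Module K W] {f : V →ₗ[K] W}
    {p : Projectivization K V} : p ∈ (LinearMap.ker f).projectivization ↔ f p.rep = 0 := by
  conv_lhs => rw [← p.mk_rep]
  exact Submodule.mk_mem_projectivization_iff _ _

namespace IsProjLine

theorem inter_nonempty {S T : Set ProjPlane} (hS : IsProjLine S) (hT : IsProjLine T) :
    (S ∩ T).Nonempty := by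
  obtain ⟨f, hf, rfl⟩ := hS
  obtain ⟨g, hg, rfl⟩ := hT
  have hdim := Submodule.finrank_sup_add_finrank_inf_eq (LinearMap.ker f) (LinearMap.ker g)
  have hsup := Submodule.finrank_le (LinearMap.ker f ⊔ LinearMap.ker g)
  rw [Module.Dual.finrank_ker_eq_two hf, Module.Dual.finrank_ker_eq_two hg] at hdim
  rw [Module.finrank_fin_fun] at hsup
  have hinf : 1 ≤ Module.finrank ℂ ↥(LinearMap.ker f ⊓ LinearMap.ker g) := by omega
  obtain ⟨v, hv, hv0⟩ := Submodule.exists_mem_ne_zero_of_ne_bot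
    (Submodule.one_le_finrank_iff.mp hinf)
  refine ⟨Projectivization.mk ℂ v hv0, ?_, ?_⟩ <;>
    simp only [Set.mem_ofPred_eq, ← Projectivization.mem_ker_projectivization_iff,
      Submodule.mk_mem_projectivization_iff]
  exacts [hv.1, hv.2]

theorem inter_subsingleton {S T : Set ProjPlane} (hS : IsProjLine S) (hT : IsProjLine T)
    (hST : S ≠ T) : (S ∩ T).Subsingleton := by
  obtain ⟨f, hf, rfl⟩ := hS
  obtain ⟨g, hg, rfl⟩ := hT
  rintro p ⟨hpf, hpg⟩ q ⟨hqf, hqg⟩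
  by_contra hpq
  simp only [Set.mem_ofPred_eq, ← Projectivization.mem_ker_projectivization_iff]
    at hpf hpg hqf hqg
  have hker := Projectivization.line_unique hpq _ _ (Module.Dual.finrank_ker_eq_two hf)
    (Module.Dual.finrank_ker_eq_two hg) hpf hqf hpg hqg
  refine hST (Set.ext fun x => ?_)
  simp only [Set.mem_ofPred_eq, ← LinearMap.mem_ker, hker]

end IsProjLine

def IsMixed (A : Finset (Set ProjPlane)) (η : Set ProjPlane → ZMod 2) (p : ProjPlane) : Prop :=
  ∃ L ∈ A, ∃ K ∈ A, p ∈ L ∧ p ∈ K ∧ η L ≠ η K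

def HasBalancedMixedPoints (A : Finset (Set ProjPlane)) (η : Set ProjPlane → ZMod 2) : Prop :=
  ∀ p, IsMixed A η p → ∀ ε, ((linesThrough A p).filter (η · = ε)).card = 2

theorem IsCocycle.hasBalancedMixedPoints {A : Finset (Set ProjPlane)}
    {η : Set ProjPlane → ZMod 2} (hη : IsCocycle 2 A η)
    (hmult : ∀ p : ProjPlane, IsMultPoint A p → mult A p ≤ 5) :
    HasBalancedMixedPoints A η := by
  rintro p ⟨L, hL, K, hK, hpL, hpK, hLK⟩ ε
  have hLp : L ∈ linesThrough A p := Finset.mem_filter.mpr ⟨hL, hpL⟩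
  have hKp : K ∈ linesThrough A p := Finset.mem_filter.mpr ⟨hK, hpK⟩
  have hpos : ∀ δ, 0 < ((linesThrough A p).filter (η · = δ)).card := fun δ =>
    Finset.card_pos.mpr <| (ZMod.eq_or_eq_of_ne hLK δ).elim
      (fun h => ⟨L, Finset.mem_filter.mpr ⟨hLp, h.symm⟩⟩)
      (fun h => ⟨K, Finset.mem_filter.mpr ⟨hKp, h.symm⟩⟩)
  have hsplit := (linesThrough A p).card_filter_add_card_filter_of_ne η zero_ne_one
  have hp : IsMultPoint A p := by
    unfold IsMultPoint mult; have := hpos 0; have := hpos 1; omega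
  obtain ⟨hsum, hconst⟩ := hη p hp
  have hmult_even : 2 ∣ mult A p := not_not.mp fun h => hLK (hconst h L hLp K hKp)
  have hone_even : 2 ∣ ((linesThrough A p).filter (η · = 1)).card := by
    rw [← ZMod.natCast_eq_zero_iff, ← Finset.sum_zmod_two_eq_card_filter]
    exact hsum hmult_even
  have h5 := hmult p hp
  unfold mult at hmult_even h5
  have := hpos 0; have := hpos 1
  rcases ZMod.eq_or_eq_of_ne zero_ne_one ε with rfl | rfl <;> omega

def mixedGraph (A : Finset (Set ProjPlane)) (η : Set ProjPlane → ZMod 2) :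
    SimpleGraph (Set ProjPlane) where
  Adj L M := L ≠ M ∧ η L = η M ∧ ∃ p, IsMixed A η p ∧ p ∈ L ∧ p ∈ M
  symm := ⟨fun _ _ h => ⟨h.1.symm, h.2.1.symm, h.2.2.imp fun _ hp => ⟨hp.1, hp.2.2, hp.2.1⟩⟩⟩
  loopless := ⟨fun _ h => h.1 rfl⟩

theorem mixedGraph_adj {A : Finset (Set ProjPlane)} {η : Set ProjPlane → ZMod 2}
    {L M : Set ProjPlane} :
    (mixedGraph A η).Adj L M ↔ L ≠ M ∧ η L = η M ∧ ∃ p, IsMixed A η p ∧ p ∈ L ∧ p ∈ M :=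
  Iff.rfl

section Counting

variable {A : Finset (Set ProjPlane)} {η : Set ProjPlane → ZMod 2}

theorem card_filter_eq_two_mul_card_filter_adj (hlines : ∀ L ∈ A, IsProjLine L)
    (hbal : HasBalancedMixedPoints A η) {L : Set ProjPlane} (hL : L ∈ A) {δ : ZMod 2}
    (hδ : δ ≠ η L) :
    (A.filter (η · = δ)).card = 2 * (A.filter ((mixedGraph A η).Adj L)).card := by
  -- double count the pairs (opposite line, neighbour) concurrent with `L`
  have hcount := Finset.card_mul_eq_card_mul (s := A.filter (η · = δ))
    (t := A.filter ((mixedGraph A η).Adj L)) (fun K M => ∃ p ∈ L, p ∈ K ∧ p ∈ M)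
    (m := 1) (n := 2) ?_ ?_
  · omega
  · intro K hK
    obtain ⟨hKA, hKδ⟩ := Finset.mem_filter.mp hK
    have hLK : L ≠ K := fun h => hδ (h ▸ hKδ).symm
    obtain ⟨p, hpL, hpK⟩ := (hlines L hL).inter_nonempty (hlines K hKA)
    have hp : IsMixed A η p := ⟨L, hL, K, hKA, hpL, hpK, fun h => hδ (hKδ ▸ h.symm)⟩
    have hLp : L ∈ (linesThrough A p).filter (η · = η L) := by simp [linesThrough, hL, hpL]
    suffices Finset.bipartiteAbove _ _ K = ((linesThrough A p).filter (η · = η L)).erase L by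
      rw [this, Finset.card_erase_of_mem hLp, hbal p hp]
    ext M
    simp only [Finset.bipartiteAbove, Finset.mem_filter, Finset.mem_erase, linesThrough,
      mixedGraph_adj]
    constructor
    · rintro ⟨⟨hMA, hLM, hηLM, -⟩, x, hxL, hxK, hxM⟩
      have hxp : x = p :=
        (hlines L hL).inter_subsingleton (hlines K hKA) hLK ⟨hxL, hxK⟩ ⟨hpL, hpK⟩
      exact ⟨Ne.symm hLM, ⟨hMA, hxp ▸ hxM⟩, hηLM.symm⟩
    · rintro ⟨hML, ⟨hMA, hpM⟩, hηM⟩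
      exact ⟨⟨hMA, Ne.symm hML, hηM.symm, p, hp, hpL, hpM⟩, p, hpL, hpK, hpM⟩
  · intro M hM
    obtain ⟨hMA, hLM, -, p, hp, hpL, hpM⟩ :=
      Finset.mem_filter.mp hM |>.imp_right mixedGraph_adj.mp
    suffices Finset.bipartiteBelow _ _ M = (linesThrough A p).filter (η · = δ) by
      rw [this, hbal p hp]
    ext K
    simp only [Finset.bipartiteBelow, Finset.mem_filter, linesThrough]
    constructor
    · rintro ⟨⟨hKA, hKδ⟩, x, hxL, hxK, hxM⟩
      have hxp : x = p :=
        (hlines L hL).inter_subsingleton (hlines M hMA) hLM ⟨hxL, hxM⟩ ⟨hpL, hpM⟩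
      exact ⟨⟨hKA, hxp ▸ hxK⟩, hKδ⟩
    · rintro ⟨⟨hKA, hpK⟩, hKδ⟩
      exact ⟨⟨hKA, hKδ⟩, p, hpL, hpK, hpM⟩

theorem card_filter_adj_add_one_le {L : Set ProjPlane} (hL : L ∈ A) :
    (A.filter ((mixedGraph A η).Adj L)).card + 1 ≤ (A.filter (η · = η L)).card := by
  have hsub : A.filter ((mixedGraph A η).Adj L) ⊆ (A.filter (η · = η L)).erase L :=
    fun M hM => by
      obtain ⟨hMA, hLM, hηLM, -⟩ := Finset.mem_filter.mp hM |>.imp_right mixedGraph_adj.mp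
      exact Finset.mem_erase.mpr ⟨Ne.symm hLM, Finset.mem_filter.mpr ⟨hMA, hηLM.symm⟩⟩
  have := Finset.card_le_card hsub
  rw [Finset.card_erase_of_mem (Finset.mem_filter.mpr ⟨hL, rfl⟩ : L ∈ A.filter (η · = η L))]
    at this
  have : 0 < (A.filter (η · = η L)).card :=
    Finset.card_pos.mpr ⟨L, Finset.mem_filter.mpr ⟨hL, rfl⟩⟩
  omega

theorem card_filter_eq_six (hlines : ∀ L ∈ A, IsProjLine L) (hbal : HasBalancedMixedPoints A η)
    (hcard : A.card = 12) (hnc : NonConstant A η) (ε : ZMod 2) :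
    (A.filter (η · = ε)).card = 6 := by
  obtain ⟨L, hL, K, hK, hLK⟩ := hnc
  have hL' := card_filter_eq_two_mul_card_filter_adj hlines hbal hL (Ne.symm hLK)
  have hK' := card_filter_eq_two_mul_card_filter_adj hlines hbal hK hLK
  have hLle := card_filter_adj_add_one_le (η := η) hL
  have hKle := card_filter_adj_add_one_le (η := η) hK
  have hsplit := A.card_filter_add_card_filter_of_ne η hLK
  rcases ZMod.eq_or_eq_of_ne hLK ε with rfl | rfl <;> omega

theorem card_filter_adj_eq_three (hlines : ∀ L ∈ A, IsProjLine L)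
    (hbal : HasBalancedMixedPoints A η) (hcard : A.card = 12) (hnc : NonConstant A η)
    {L : Set ProjPlane} (hL : L ∈ A) : (A.filter ((mixedGraph A η).Adj L)).card = 3 := by
  obtain ⟨δ, hδ⟩ := exists_ne (η L)
  have := card_filter_eq_two_mul_card_filter_adj hlines hbal hL hδ
  rw [card_filter_eq_six hlines hbal hcard hnc] at this
  omega

theorem filter_filter_mixedGraph_adj {L : Set ProjPlane} {ε : ZMod 2} (hL : η L = ε) :
    (A.filter (η · = ε)).filter ((mixedGraph A η).Adj L) = A.filter ((mixedGraph A η).Adj L) := by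
  rw [Finset.filter_filter]
  exact Finset.filter_congr fun M _ =>
    and_iff_right_of_imp fun h => (mixedGraph_adj.mp h).2.1.symm.trans hL

theorem exists_mixedGraph_adj_of_isMixed (hbal : HasBalancedMixedPoints A η) {L : Set ProjPlane}
    (hL : L ∈ A) {s : ProjPlane} (hs : IsMixed A η s) (hsL : s ∈ L) :
    ∃ P ∈ A, (mixedGraph A η).Adj L P ∧ s ∈ P := by
  have hLs : L ∈ (linesThrough A s).filter (η · = η L) := by simp [linesThrough, hL, hsL]
  obtain ⟨P, hP⟩ : (((linesThrough A s).filter (η · = η L)).erase L).Nonempty := by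
    rw [← Finset.card_pos, Finset.card_erase_of_mem hLs, hbal s hs]
    decide
  simp only [Finset.mem_erase, Finset.mem_filter, linesThrough] at hP
  obtain ⟨hPL, ⟨hPA, hsP⟩, hηP⟩ := hP
  exact ⟨P, hPA, ⟨Ne.symm hPL, hηP.symm, s, hs, hsL, hsP⟩, hsP⟩

theorem mixedGraph_triangle_free (hlines : ∀ L ∈ A, IsProjLine L)
    (hbal : HasBalancedMixedPoints A η)
    (hdeg : ∀ L ∈ A, (A.filter ((mixedGraph A η).Adj L)).card = 3)
    {L M N : Set ProjPlane} (hL : L ∈ A) (hM : M ∈ A) (hN : N ∈ A)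
    (hLM : (mixedGraph A η).Adj L M) (hLN : (mixedGraph A η).Adj L N) :
    ¬ (mixedGraph A η).Adj M N := by
  rintro ⟨hMN, -, r, hr, hrM, hrN⟩
  obtain ⟨hLM', hηLM, p, -, hpL, hpM⟩ := mixedGraph_adj.mp hLM
  obtain ⟨hLN', hηLN, q, -, hqL, hqN⟩ := mixedGraph_adj.mp hLN
  have hrL : r ∉ L := fun hrL => by
    have hsub : {L, M, N} ⊆ (linesThrough A r).filter (η · = η L) := by
      simp only [Finset.insert_subset_iff, Finset.singleton_subset_iff, Finset.mem_filter,
        linesThrough]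
      exact ⟨⟨⟨hL, hrL⟩, trivial⟩, ⟨⟨hM, hrM⟩, hηLM.symm⟩, ⟨⟨hN, hrN⟩, hηLN.symm⟩⟩
    have := Finset.card_le_card hsub
    rw [Finset.card_eq_three.mpr ⟨L, M, N, hLM', hLN', hMN, rfl⟩, hbal r hr] at this
    omega
  obtain ⟨δ, hδ⟩ := exists_ne (η L)
  -- Each of the two lines of value `δ` through `r` meets `L` at a mixed point whose second
  -- line of value `η L` is a neighbour of `L` other than `M` and `N`. There is only one such
  -- neighbour, so both lines meet `L` at the same point and share two points.
  have hpartner : ∀ J ∈ (linesThrough A r).filter (η · = δ), ∃ s ∈ L, s ∈ J ∧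
      ∃ P ∈ A.filter ((mixedGraph A η).Adj L) \ {M, N}, s ∈ P := by
    intro J hJ
    simp only [Finset.mem_filter, linesThrough] at hJ
    obtain ⟨⟨hJA, hrJ⟩, hJδ⟩ := hJ
    obtain ⟨s, hsL, hsJ⟩ := (hlines L hL).inter_nonempty (hlines J hJA)
    have hs : IsMixed A η s := ⟨L, hL, J, hJA, hsL, hsJ, hJδ ▸ hδ.symm⟩
    obtain ⟨P, hPA, hLP, hsP⟩ := exists_mixedGraph_adj_of_isMixed hbal hL hs hsL
    have hne : ∀ X ∈ A, ∀ x ∈ L, x ∈ X → r ∈ X → P ≠ X := by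
      rintro X - x hxL hxX hrX rfl
      have hxs : x = s :=
        (hlines L hL).inter_subsingleton (hlines P hPA) hLP.1 ⟨hxL, hxX⟩ ⟨hsL, hsP⟩
      have hJP : J ≠ P := fun h => hδ (hJδ ▸ h ▸ hLP.2.1.symm)
      have hsr : s = r :=
        (hlines J hJA).inter_subsingleton (hlines P hPA) hJP ⟨hsJ, hsP⟩ ⟨hrJ, hrX⟩
      exact hrL (hsr ▸ hsL)
    refine ⟨s, hsL, hsJ, P, ?_, hsP⟩
    simp only [Finset.mem_sdiff, Finset.mem_filter, Finset.mem_insert, Finset.mem_singleton]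
    exact ⟨⟨hPA, hLP⟩, fun h => h.elim (hne M hM p hpL hpM hrM) (hne N hN q hqL hqN hrN)⟩
  obtain ⟨K, K', hKK', hrK⟩ := Finset.card_eq_two.mp (hbal r hr δ)
  have hK : K ∈ (linesThrough A r).filter (η · = δ) := by simp [hrK]
  have hK' : K' ∈ (linesThrough A r).filter (η · = δ) := by simp [hrK]
  obtain ⟨s, hsL, hsK, P, hP, hsP⟩ := hpartner K hK
  obtain ⟨s', hs'L, hs'K', P', hP', hs'P'⟩ := hpartner K' hK'
  have hrest : (A.filter ((mixedGraph A η).Adj L) \ {M, N}).card = 1 := by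
    rw [Finset.card_sdiff_of_subset (by simp [Finset.insert_subset_iff, hM, hN, hLM, hLN]),
      hdeg L hL, Finset.card_pair hMN]
  have hPP' : P = P' := Finset.card_le_one.mp hrest.le P hP P' hP'
  subst hPP'
  obtain ⟨hPA, hLP⟩ := Finset.mem_filter.mp (Finset.mem_sdiff.mp hP).1
  have hss' : s = s' :=
    (hlines L hL).inter_subsingleton (hlines P hPA) hLP.1 ⟨hsL, hsP⟩ ⟨hs'L, hs'P'⟩
  subst hss'
  simp only [Finset.mem_filter, linesThrough] at hK hK'
  have hsr : s = r := (hlines K hK.1.1).inter_subsingleton (hlines K' hK'.1.1) hKK'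
    ⟨hsK, hs'K'⟩ ⟨hK.1.2, hK'.1.2⟩
  exact hrL (hsr ▸ hsL)

end Counting

theorem isNet_of_coloring {ι : Type*} [Fintype ι] {k q : ℕ} {A : Finset (Set ProjPlane)}
    (hlines : ∀ L ∈ A, IsProjLine L) (κ : Set ProjPlane → ι) (hk : Fintype.card ι = k)
    (hclass : ∀ c, (A.filter (κ · = c)).card = q)
    (hmeet : ∀ L ∈ A, ∀ K ∈ A, κ L ≠ κ K → ∀ p ∈ L, p ∈ K →
      ∀ c, ∃! N, N ∈ A.filter (κ · = c) ∧ p ∈ N) :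
    ∃ C, IsNet k q A C := by
  let e := Fintype.equivFinOfCardEq hk
  refine ⟨fun i => A.filter (κ · = e.symm i), hlines, ?_, fun i => hclass _, ?_,
    fun i => Finset.filter_subset _ _, fun L hL => ⟨e (κ L), by simp [hL]⟩, ?_⟩
  · rw [Finset.card_eq_sum_card_fiberwise (f := κ) (t := Finset.univ) (fun _ _ => by simp)]
    simp [hclass, hk]
  · intro i j hij
    exact Finset.disjoint_filter.mpr fun L _ hi hj => hij (e.symm.injective (hi.symm.trans hj))
  · intro i j hij L hL K hK p hpL hpK m
    rw [Finset.mem_filter] at hL hK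
    exact hmeet L hL.1 K hK.1 (by rw [hL.2, hK.2]; exact e.symm.injective.ne hij) p hpL hpK _

section Net

variable {A : Finset (Set ProjPlane)} {η : Set ProjPlane → ZMod 2}

theorem isNet_of_bipartition (hlines : ∀ L ∈ A, IsProjLine L) (hbal : HasBalancedMixedPoints A η)
    {q : ℕ} (σ : ZMod 2 → Set ProjPlane → Bool)
    (hσcard : ∀ ε b, ((A.filter (η · = ε)).filter (σ ε · = b)).card = q)
    (hσ : ∀ ε, ∀ L ∈ A.filter (η · = ε), ∀ M ∈ A.filter (η · = ε),
      ((mixedGraph A η).Adj L M ↔ σ ε L ≠ σ ε M)) :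
    ∃ C, IsNet 4 q A C := by
  have hmem : ∀ {L ε}, L ∈ A → η L = ε → L ∈ A.filter (η · = ε) := fun hL hε =>
    Finset.mem_filter.mpr ⟨hL, hε⟩
  refine isNet_of_coloring hlines (fun L => (η L, σ (η L) L)) rfl (fun ⟨ε, b⟩ => ?_) ?_
  · rw [← hσcard ε b]
    congr 1
    ext L
    simp only [Finset.mem_filter, Prod.mk.injEq]
    constructor
    · rintro ⟨hL, rfl, hb⟩; exact ⟨⟨hL, rfl⟩, hb⟩
    · rintro ⟨⟨hL, rfl⟩, hb⟩; exact ⟨hL, rfl, hb⟩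
  intro L hL K hK hLK p hpL hpK ⟨ε, b⟩
  have hp : IsMixed A η p := by
    by_cases hηLK : η L = η K
    · have hadj : (mixedGraph A η).Adj L K := by
        rw [hσ (η L) L (hmem hL rfl) K (hmem hK hηLK.symm)]
        exact fun h => hLK (by simp only [Prod.mk.injEq]; exact ⟨hηLK, hηLK ▸ h⟩)
      obtain ⟨hLK', -, x, hx, hxL, hxK⟩ := mixedGraph_adj.mp hadj
      rwa [(hlines L hL).inter_subsingleton (hlines K hK) hLK' ⟨hxL, hxK⟩ ⟨hpL, hpK⟩] at hx
    · exact ⟨L, hL, K, hK, hpL, hpK, hηLK⟩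
  have hlines_p := Finset.existsUnique_mem_eq_of_card_eq_two (hbal p hp ε) (f := σ ε)
    (fun E hE F hF hEF => by
      simp only [Finset.mem_filter, linesThrough] at hE hF
      exact (hσ ε E (hmem hE.1.1 hE.2) F (hmem hF.1.1 hF.2)).mp
        ⟨hEF, hE.2.trans hF.2.symm, p, hp, hE.1.2, hF.1.2⟩) b
  refine (existsUnique_congr fun N => ?_).mp hlines_p
  simp only [Finset.mem_filter, linesThrough, Prod.mk.injEq]
  constructor
  · rintro ⟨⟨⟨hN, hpN⟩, rfl⟩, hb⟩; exact ⟨⟨hN, rfl, hb⟩, hpN⟩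
  · rintro ⟨⟨hN, rfl, hb⟩, hpN⟩; exact ⟨⟨⟨hN, hpN⟩, rfl⟩, hb⟩

end Net

/-- an arrangement of 12 lines with points of multiplicity at most 5
admitting a non-constant 2-cocycle is a (4,3)-net. -/
theorem statement17 (A : Finset (Set ProjPlane))
    (hlines : ∀ L ∈ A, IsProjLine L) (hcard : A.card = 12)
    (hmult : ∀ p : ProjPlane, IsMultPoint A p → mult A p ≤ 5)
    (η : Set ProjPlane → ZMod 2) (hη : IsCocycle 2 A η) (hnc : NonConstant A η) :
    ∃ C : Fin 4 → Finset (Set ProjPlane), IsNet 4 3 A C := by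
  have hbal := hη.hasBalancedMixedPoints hmult
  have hdeg : ∀ L ∈ A, (A.filter ((mixedGraph A η).Adj L)).card = 3 := fun L hL =>
    card_filter_adj_eq_three hlines hbal hcard hnc hL
  have hbip : ∀ ε : ZMod 2, ∃ σ : Set ProjPlane → Bool,
      (∀ b, ((A.filter (η · = ε)).filter (σ · = b)).card = 3) ∧
      ∀ L ∈ A.filter (η · = ε), ∀ M ∈ A.filter (η · = ε),
        ((mixedGraph A η).Adj L M ↔ σ L ≠ σ M) := fun ε =>
    (mixedGraph A η).exists_bipartition_of_regular_of_triangle_free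
      (card_filter_eq_six hlines hbal hcard hnc ε)
      (fun L hL => by
        rw [filter_filter_mixedGraph_adj (Finset.mem_filter.mp hL).2]
        exact hdeg L (Finset.mem_filter.mp hL).1)
      (fun L hL M hM N hN => mixedGraph_triangle_free hlines hbal hdeg
        (Finset.mem_filter.mp hL).1 (Finset.mem_filter.mp hM).1 (Finset.mem_filter.mp hN).1)
  choose σ hσcard hσ using hbip
  exact isNet_of_bipartition hlines hbal σ hσcard hσ
end
end

section
/- There do not exist complex numbers a, b, c, d with a ≠ 0, b ≠ 0, c ≠ 0, d ≠ 0, b ≠ 1, d ≠ 1, a ≠ c, d ≠ a and d ≠ c satisfying simultaneously the four equations: ab − bdc + dc − d = 0; (abc − cd)(1 − b) − bc + d = 0; ad − abd + bc − d = 0; and abd − ad − ab²c − ab + d + abc = 0. -/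
/-- the four polynomial collinearity conditions coming from Pascal's hexagon
theorem have no common solution `(a,b,c,d)` in ℂ with `a,b,c,d ≠ 0`, `b,d ≠ 1`, `a ≠ c`,
`d ≠ a`, `d ≠ c`. -/
theorem statement19 :
    ¬ ∃ a b c d : ℂ, a ≠ 0 ∧ b ≠ 0 ∧ c ≠ 0 ∧ d ≠ 0 ∧ b ≠ 1 ∧ d ≠ 1 ∧
      a ≠ c ∧ d ≠ a ∧ d ≠ c ∧
      a * b - b * d * c + d * c - d = 0 ∧
      (a * b * c - c * d) * (1 - b) - b * c + d = 0 ∧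
      a * d - a * b * d + b * c - d = 0 ∧
      a * b * d - a * d - a * b ^ 2 * c - a * b + d + a * b * c = 0 := by
  rintro ⟨a, b, c, d, ha, hb, hc, hd, hb1, hd1, hac, hda, hdc, h1, h2, h3, h4⟩
  have hb1' : (1 : ℂ) - b ≠ 0 := sub_ne_zero.mpr hb1.symm
  -- From E2 + E3 : (1-b)*(a*b*c - c*d + a*d) = 0, hence
  have hB : a * b * c - c * d + a * d = 0 := by
    have h : (1 - b) * (a * b * c - c * d + a * d) = 0 := by linear_combination h2 + h3
    rcases mul_eq_zero.1 h with h | h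
    · exact absurd h hb1'
    · exact h
  -- From E3 + E4 :
  have hA : b * c - a * b ^ 2 * c - a * b + a * b * c = 0 := by linear_combination h3 + h4
  -- From c*E1 - hB and d ≠ 0 :
  have hC : a = c ^ 2 * (1 - b) := by
    have h : d * (c ^ 2 * (1 - b) - a) = 0 := by linear_combination c * h1 - hB
    rcases mul_eq_zero.1 h with h | h
    · exact absurd h hd
    · exact (sub_eq_zero.1 h).symm
  -- Substitute hC into hA and cancel b, c : with t = c*(1-b), 1 - t + t^2 = 0
  have hD : 1 - c * (1 - b) + (c * (1 - b)) ^ 2 = 0 := by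
    have h : b * (c * (1 - c * (1 - b) + (c * (1 - b)) ^ 2)) = 0 := by
      linear_combination hA + (b - b * c * (1 - b)) * hC
    rcases mul_eq_zero.1 h with h | h
    · exact absurd h hb
    rcases mul_eq_zero.1 h with h | h
    · exact absurd h hc
    · exact h
  -- From E3 and hC : d*(1 - t^2) = b*c
  have hE : d * (1 - (c * (1 - b)) ^ 2) = b * c := by
    linear_combination -h3 + d * (1 - b) * hC
  -- From hB and hC, after cancelling c : b*c*t = d*(1 - t)
  have hF : b * c * (c * (1 - b)) = d * (1 - c * (1 - b)) := by
    have h : c * (b * c * (c * (1 - b)) - d * (1 - c * (1 - b))) = 0 := by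
      linear_combination hB - (b * c + d) * hC
    rcases mul_eq_zero.1 h with h | h
    · exact absurd h hc
    · linear_combination h
  -- Combine hE, hF and cancel d : t*(1 - t^2) = 1 - t
  have hG : c * (1 - b) * (1 - (c * (1 - b)) ^ 2) - (1 - c * (1 - b)) = 0 := by
    have h : d * (c * (1 - b) * (1 - (c * (1 - b)) ^ 2) - (1 - c * (1 - b))) = 0 := by
      linear_combination (c * (1 - b)) * hE + hF
    rcases mul_eq_zero.1 h with h | h
    · exact absurd h hd
    · exact h
  -- Together hD and hG force t = 0, then hD gives 1 = 0.
  have ht : c * (1 - b) = 0 := by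
    linear_combination (1 / 2 : ℂ) * hG + ((c * (1 - b) + 1) / 2) * hD
  have : (1 : ℂ) = 0 := by
    linear_combination hD + (1 - c * (1 - b)) * ht
  exact one_ne_zero this
end
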